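/- Let A be an algebra of subsets of Ω and λ ∈ ba(A)₊. Define the λ-completion A(λ) = {B ⊆ Ω : inf{λ(A' \ A) : A, A' ∈ A, A ⊆ B ⊆ A'} = 0}. Then A(λ) is an algebra of subsets of Ω containing A, and the formula λ̄(B) = sup{λ(A) : A ∈ A, A ⊆ B} = inf{λ(A') : A' ∈ A, B ⊆ A'} defines the unique finitely additive extension of λ to A(λ). -/

import Mathlib

open Set Filter Topology

variable {Ω : Type*}

/-- `𝒜` is an algebra of subsets of `Ω`. -/
def IsAlg (𝒜 : Set (Set Ω)) : Prop :=
  ∅ ∈ 𝒜 ∧ Set.univ ∈ 𝒜 ∧ (∀ A ∈ 𝒜, Aᶜ ∈ 𝒜) ∧ ∀ A ∈ 𝒜, ∀ B ∈ 𝒜, A ∪ B ∈ 𝒜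

/-- bounded finitely additive set function (element of ba(𝒜)). -/
def IsFinAdd (𝒜 : Set (Set Ω)) (μ : Set Ω → ℝ) : Prop :=
  μ ∅ = 0 ∧
  (∀ A ∈ 𝒜, ∀ B ∈ 𝒜, Disjoint A B → μ (A ∪ B) = μ A + μ B) ∧
  ∃ C : ℝ, ∀ A ∈ 𝒜, |μ A| ≤ C

def IsPos (𝒜 : Set (Set Ω)) (μ : Set Ω → ℝ) : Prop := ∀ A ∈ 𝒜, 0 ≤ μ A

def IsCtblAdd (𝒜 : Set (Set Ω)) (μ : Set Ω → ℝ) : Prop :=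
  ∀ A : ℕ → Set Ω, (∀ n, A n ∈ 𝒜) → Pairwise (Function.onFun Disjoint A) →
    (⋃ n, A n) ∈ 𝒜 → HasSum (fun n => μ (A n)) (μ (⋃ n, A n))

/-- total variation of `μ` on `A`. -/
noncomputable def tv (𝒜 : Set (Set Ω)) (μ : Set Ω → ℝ) (A : Set Ω) : ℝ :=
  sSup {x | ∃ B ∈ 𝒜, B ⊆ A ∧ x = μ B - μ (A \ B)}

noncomputable def tvNorm (𝒜 : Set (Set Ω)) (μ : Set Ω → ℝ) : ℝ := tv 𝒜 μ Set.univ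

/-- `ν ≪ μ`, absolute continuity in the ε-δ sense. -/
def AC (𝒜 : Set (Set Ω)) (ν μ : Set Ω → ℝ) : Prop :=
  ∀ ε > (0:ℝ), ∃ δ > (0:ℝ), ∀ E ∈ 𝒜, tv 𝒜 μ E < δ → tv 𝒜 ν E < ε

/-- `μ ⊥ ν`, singularity in the ε sense. -/
def Sing (𝒜 : Set (Set Ω)) (μ ν : Set Ω → ℝ) : Prop :=
  ∀ ε > (0:ℝ), ∃ B ∈ 𝒜, tv 𝒜 μ Bᶜ + tv 𝒜 ν B < ε

/-- normalized total variation `|μ|/(1 ∨ ‖μ‖)`. -/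
noncomputable def nvar (𝒜 : Set (Set Ω)) (μ : Set Ω → ℝ) (A : Set Ω) : ℝ :=
  tv 𝒜 μ A / (1 ⊔ tvNorm 𝒜 μ)

/-- membership in `𝐀(M)`: countable convex combinations of normalized variations. -/
def MemAM (𝒜 : Set (Set Ω)) (M : Set (Set Ω → ℝ)) (m : Set Ω → ℝ) : Prop :=
  ∃ (μ : ℕ → Set Ω → ℝ) (α : ℕ → ℝ),
    (∀ n, μ n ∈ M) ∧ (∀ n, 0 ≤ α n) ∧ HasSum α 1 ∧
    ∀ A : Set Ω, m A = ∑' n, α n * nvar 𝒜 (μ n) A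

/-- membership in `𝐋(M)`. -/
def MemLM (𝒜 : Set (Set Ω)) (M : Set (Set Ω → ℝ)) (ν : Set Ω → ℝ) : Prop :=
  ∃ m, MemAM 𝒜 M m ∧ AC 𝒜 ν m

/-- order on ba(𝒜). -/
def baLE (𝒜 : Set (Set Ω)) (μ ν : Set Ω → ℝ) : Prop := ∀ A ∈ 𝒜, μ A ≤ ν A

/-- λ-completion of 𝒜. -/
def Completion (𝒜 : Set (Set Ω)) (l : Set Ω → ℝ) : Set (Set Ω) :=
  {B | ∀ ε > (0:ℝ), ∃ A ∈ 𝒜, ∃ A' ∈ 𝒜, A ⊆ B ∧ B ⊆ A' ∧ l (A' \ A) < ε}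

/-- the extension `λ̄` to the completion. -/
noncomputable def extOf (𝒜 : Set (Set Ω)) (l : Set Ω → ℝ) (B : Set Ω) : ℝ :=
  sSup {x | ∃ A ∈ 𝒜, A ⊆ B ∧ x = l A}

/-- λ-atom. -/
def IsLAtom (𝒜 : Set (Set Ω)) (l : Set Ω → ℝ) (B : Set Ω) : Prop :=
  B ∈ 𝒜 ∧ 0 < l B ∧ ∀ A ∈ 𝒜, A ⊆ B → l A = 0 ∨ l (B \ A) = 0

/-- simple 𝒜-measurable function. -/
def IsSimple (𝒜 : Set (Set Ω)) (f : Ω → ℝ) : Prop :=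
  (Set.range f).Finite ∧ ∀ c : ℝ, f ⁻¹' {c} ∈ 𝒜

/-- integral of a simple function. -/
noncomputable def simpleInt (μ : Set Ω → ℝ) (f : Ω → ℝ) : ℝ :=
  ∑ᶠ c : ℝ, c * μ (f ⁻¹' {c})

/-- outer measure associated with l on 𝒜. -/
noncomputable def outerOf (𝒜 : Set (Set Ω)) (l : Set Ω → ℝ) (S : Set Ω) : ℝ :=
  sInf {x | ∃ A ∈ 𝒜, S ⊆ A ∧ x = l A}

/-- Dunford–Schwartz approximating sequence for `f`. -/
def ApproxSeq (𝒜 : Set (Set Ω)) (l : Set Ω → ℝ) (f : Ω → ℝ) (g : ℕ → Ω → ℝ) : Prop :=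
  (∀ n, IsSimple 𝒜 (g n)) ∧
  (∀ ε > (0:ℝ), ∃ N, ∀ p ≥ N, ∀ q ≥ N, simpleInt l (fun x => |g p x - g q x|) < ε) ∧
  (∀ ε > (0:ℝ), Tendsto (fun n => outerOf 𝒜 l {x | ε ≤ |g n x - f x|}) atTop (nhds 0))

/-- membership in L¹(l). -/
def MemL1 (𝒜 : Set (Set Ω)) (l : Set Ω → ℝ) (f : Ω → ℝ) : Prop :=
  ∃ g, ApproxSeq 𝒜 l f g

/-- the Dunford–Schwartz integral. -/
noncomputable def dsInt (𝒜 : Set (Set Ω)) (l : Set Ω → ℝ) (f : Ω → ℝ) : ℝ :=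
  sInf {I | ∃ g, ApproxSeq 𝒜 l f g ∧ Tendsto (fun n => simpleInt l (g n)) atTop (nhds I)}

/-- L¹ seminorm distance. -/
noncomputable def l1dist (𝒜 : Set (Set Ω)) (l : Set Ω → ℝ) (f h : Ω → ℝ) : ℝ :=
  dsInt 𝒜 l (fun x => |f x - h x|)

/-- membership in the L¹(l)-closure of a set C of functions. -/
def InL1Closure (𝒜 : Set (Set Ω)) (l : Set Ω → ℝ) (C : Set (Ω → ℝ)) (f : Ω → ℝ) : Prop :=
  ∀ ε > (0:ℝ), ∃ h ∈ C, l1dist 𝒜 l f h < ε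

/-- the set C = K − Sim(𝒜)₊. -/
def ConeDiff (𝒜 : Set (Set Ω)) (K : Set (Ω → ℝ)) : Set (Ω → ℝ) :=
  {f | ∃ k ∈ K, ∃ s : Ω → ℝ, IsSimple 𝒜 s ∧ (∀ x, 0 ≤ s x) ∧ f = k - s}

/-!
Every `B ∈ 𝒜(λ)` is squeezed between sets `A ⊆ B ⊆ A'` of `𝒜` with `λ (A' \ A)` arbitrarily small,
so the inner value `λ̄ B = sup {λ A : A ⊆ B}` is within `ε` of `λ A'` for some `A' ⊇ B`. This gives
the inf formula, lets outer approximations of two disjoint sets be combined into additivity, and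
pins any positive additive extension `m` between `λ̄ B` and `λ A'`, forcing `m = λ̄`.
-/

namespace IsAlg

variable {𝒜 : Set (Set Ω)}

theorem empty_mem (h𝒜 : IsAlg 𝒜) : ∅ ∈ 𝒜 := h𝒜.1

theorem univ_mem (h𝒜 : IsAlg 𝒜) : univ ∈ 𝒜 := h𝒜.2.1

theorem compl_mem (h𝒜 : IsAlg 𝒜) {A : Set Ω} (hA : A ∈ 𝒜) : Aᶜ ∈ 𝒜 := h𝒜.2.2.1 A hA

theorem union_mem (h𝒜 : IsAlg 𝒜) {A B : Set Ω} (hA : A ∈ 𝒜) (hB : B ∈ 𝒜) : A ∪ B ∈ 𝒜 :=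
  h𝒜.2.2.2 A hA B hB

theorem inter_mem (h𝒜 : IsAlg 𝒜) {A B : Set Ω} (hA : A ∈ 𝒜) (hB : B ∈ 𝒜) : A ∩ B ∈ 𝒜 := by
  simpa [compl_union] using h𝒜.compl_mem (h𝒜.union_mem (h𝒜.compl_mem hA) (h𝒜.compl_mem hB))

theorem sdiff_mem (h𝒜 : IsAlg 𝒜) {A B : Set Ω} (hA : A ∈ 𝒜) (hB : B ∈ 𝒜) : A \ B ∈ 𝒜 :=
  h𝒜.inter_mem hA (h𝒜.compl_mem hB)

end IsAlg

namespace IsFinAdd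

variable {𝒜 : Set (Set Ω)} {μ : Set Ω → ℝ}

theorem eq_add_sdiff (hμ : IsFinAdd 𝒜 μ) (h𝒜 : IsAlg 𝒜) {A B : Set Ω} (hA : A ∈ 𝒜)
    (hB : B ∈ 𝒜) (hAB : A ⊆ B) : μ B = μ A + μ (B \ A) := by
  rw [← hμ.2.1 A hA (B \ A) (h𝒜.sdiff_mem hB hA) disjoint_sdiff_right, union_sdiff_cancel hAB]

theorem mono (hμ : IsFinAdd 𝒜 μ) (h𝒜 : IsAlg 𝒜) (hpos : IsPos 𝒜 μ) {A B : Set Ω}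
    (hA : A ∈ 𝒜) (hB : B ∈ 𝒜) (hAB : A ⊆ B) : μ A ≤ μ B := by
  linarith [hμ.eq_add_sdiff h𝒜 hA hB hAB, hpos _ (h𝒜.sdiff_mem hB hA)]

theorem union_le (hμ : IsFinAdd 𝒜 μ) (h𝒜 : IsAlg 𝒜) (hpos : IsPos 𝒜 μ) {A B : Set Ω}
    (hA : A ∈ 𝒜) (hB : B ∈ 𝒜) : μ (A ∪ B) ≤ μ A + μ B := by
  have hAB := h𝒜.union_mem hA hB
  have hsplit := hμ.eq_add_sdiff h𝒜 hA hAB subset_union_left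
  have hrest : μ ((A ∪ B) \ A) ≤ μ B :=
    hμ.mono h𝒜 hpos (h𝒜.sdiff_mem hAB hA) hB fun _ hx => hx.1.resolve_left hx.2
  linarith

end IsFinAdd

section Extension

variable {𝒜 : Set (Set Ω)} {l : Set Ω → ℝ}

theorem subset_completion (hl0 : l ∅ = 0) : 𝒜 ⊆ Completion 𝒜 l :=
  fun A hA _ hε => ⟨A, hA, A, hA, subset_rfl, subset_rfl, by rwa [sdiff_self, hl0]⟩

theorem isAlg_completion (h𝒜 : IsAlg 𝒜) (hl : IsFinAdd 𝒜 l) (hpos : IsPos 𝒜 l) :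
    IsAlg (Completion 𝒜 l) := by
  refine ⟨subset_completion hl.1 h𝒜.empty_mem, subset_completion hl.1 h𝒜.univ_mem, ?_, ?_⟩
  · intro B hB ε hε
    obtain ⟨A, hA, A', hA', hAB, hBA', hlt⟩ := hB ε hε
    exact ⟨A'ᶜ, h𝒜.compl_mem hA', Aᶜ, h𝒜.compl_mem hA, compl_subset_compl.2 hBA',
      compl_subset_compl.2 hAB, by rwa [compl_sdiff_compl]⟩
  · intro B₁ hB₁ B₂ hB₂ ε hε
    obtain ⟨A₁, hA₁, A₁', hA₁', hAB₁, hBA₁, hlt₁⟩ := hB₁ (ε / 2) (half_pos hε)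
    obtain ⟨A₂, hA₂, A₂', hA₂', hAB₂, hBA₂, hlt₂⟩ := hB₂ (ε / 2) (half_pos hε)
    refine ⟨A₁ ∪ A₂, h𝒜.union_mem hA₁ hA₂, A₁' ∪ A₂', h𝒜.union_mem hA₁' hA₂',
      union_subset_union hAB₁ hAB₂, union_subset_union hBA₁ hBA₂, ?_⟩
    have hgap : (A₁' ∪ A₂') \ (A₁ ∪ A₂) ⊆ (A₁' \ A₁) ∪ (A₂' \ A₂) := by
      rintro x ⟨hx | hx, hx'⟩
      · exact Or.inl ⟨hx, fun h => hx' (Or.inl h)⟩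
      · exact Or.inr ⟨hx, fun h => hx' (Or.inr h)⟩
    have hD₁ := h𝒜.sdiff_mem hA₁' hA₁
    have hD₂ := h𝒜.sdiff_mem hA₂' hA₂
    calc l ((A₁' ∪ A₂') \ (A₁ ∪ A₂))
        ≤ l ((A₁' \ A₁) ∪ (A₂' \ A₂)) :=
          hl.mono h𝒜 hpos (h𝒜.sdiff_mem (h𝒜.union_mem hA₁' hA₂') (h𝒜.union_mem hA₁ hA₂))
            (h𝒜.union_mem hD₁ hD₂) hgap
      _ ≤ l (A₁' \ A₁) + l (A₂' \ A₂) := hl.union_le h𝒜 hpos hD₁ hD₂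
      _ < ε := by linarith

theorem extOf_le (h𝒜 : IsAlg 𝒜) (hl0 : l ∅ = 0) {B : Set Ω} {c : ℝ}
    (h : ∀ A ∈ 𝒜, A ⊆ B → l A ≤ c) : extOf 𝒜 l B ≤ c :=
  csSup_le ⟨0, ∅, h𝒜.empty_mem, empty_subset B, hl0.symm⟩ fun _ ⟨A, hA, hAB, hx⟩ => hx ▸ h A hA hAB

theorem extOf_le_of_subset (h𝒜 : IsAlg 𝒜) (hl : IsFinAdd 𝒜 l) (hpos : IsPos 𝒜 l)
    {B A' : Set Ω} (hA' : A' ∈ 𝒜) (hBA' : B ⊆ A') : extOf 𝒜 l B ≤ l A' :=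
  extOf_le h𝒜 hl.1 fun _ hA hAB => hl.mono h𝒜 hpos hA hA' (hAB.trans hBA')

theorem le_extOf (h𝒜 : IsAlg 𝒜) (hl : IsFinAdd 𝒜 l) (hpos : IsPos 𝒜 l) {A B : Set Ω}
    (hA : A ∈ 𝒜) (hAB : A ⊆ B) : l A ≤ extOf 𝒜 l B :=
  le_csSup ⟨l univ, fun _ ⟨C, hC, _, hx⟩ => hx ▸ hl.mono h𝒜 hpos hC h𝒜.univ_mem (subset_univ C)⟩
    ⟨A, hA, hAB, rfl⟩

theorem extOf_nonneg (h𝒜 : IsAlg 𝒜) (hl : IsFinAdd 𝒜 l) (hpos : IsPos 𝒜 l) (B : Set Ω) :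
    0 ≤ extOf 𝒜 l B :=
  hl.1 ▸ le_extOf h𝒜 hl hpos h𝒜.empty_mem (empty_subset B)

theorem extOf_eq_of_mem (h𝒜 : IsAlg 𝒜) (hl : IsFinAdd 𝒜 l) (hpos : IsPos 𝒜 l) {A : Set Ω}
    (hA : A ∈ 𝒜) : extOf 𝒜 l A = l A :=
  (extOf_le_of_subset h𝒜 hl hpos hA subset_rfl).antisymm (le_extOf h𝒜 hl hpos hA subset_rfl)

theorem exists_superset_lt_extOf_add (h𝒜 : IsAlg 𝒜) (hl : IsFinAdd 𝒜 l) (hpos : IsPos 𝒜 l)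
    {B : Set Ω} (hB : B ∈ Completion 𝒜 l) {ε : ℝ} (hε : 0 < ε) :
    ∃ A' ∈ 𝒜, B ⊆ A' ∧ l A' < extOf 𝒜 l B + ε := by
  obtain ⟨A, hA, A', hA', hAB, hBA', hlt⟩ := hB ε hε
  refine ⟨A', hA', hBA', ?_⟩
  linarith [hl.eq_add_sdiff h𝒜 hA hA' (hAB.trans hBA'), le_extOf h𝒜 hl hpos hA hAB]

theorem extOf_eq_sInf (h𝒜 : IsAlg 𝒜) (hl : IsFinAdd 𝒜 l) (hpos : IsPos 𝒜 l) {B : Set Ω}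
    (hB : B ∈ Completion 𝒜 l) : extOf 𝒜 l B = sInf {x | ∃ A' ∈ 𝒜, B ⊆ A' ∧ x = l A'} := by
  have hbdd : BddBelow {x | ∃ A' ∈ 𝒜, B ⊆ A' ∧ x = l A'} :=
    ⟨0, fun _ ⟨A', hA', _, hx⟩ => hx ▸ hpos A' hA'⟩
  refine le_antisymm (le_csInf ⟨l univ, univ, h𝒜.univ_mem, subset_univ B, rfl⟩ ?_) ?_
  · rintro _ ⟨A', hA', hBA', rfl⟩
    exact extOf_le_of_subset h𝒜 hl hpos hA' hBA'
  · refine le_of_forall_pos_lt_add fun ε hε => ?_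
    obtain ⟨A', hA', hBA', hlt⟩ := exists_superset_lt_extOf_add h𝒜 hl hpos hB hε
    exact (csInf_le hbdd ⟨A', hA', hBA', rfl⟩).trans_lt hlt

theorem extOf_union (h𝒜 : IsAlg 𝒜) (hl : IsFinAdd 𝒜 l) (hpos : IsPos 𝒜 l) {B₁ B₂ : Set Ω}
    (hB₁ : B₁ ∈ Completion 𝒜 l) (hB₂ : B₂ ∈ Completion 𝒜 l) (hdisj : Disjoint B₁ B₂) :
    extOf 𝒜 l (B₁ ∪ B₂) = extOf 𝒜 l B₁ + extOf 𝒜 l B₂ := by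
  refine le_antisymm (le_of_forall_pos_lt_add fun ε hε => ?_) ?_
  · obtain ⟨A₁, hA₁, hBA₁, hlt₁⟩ := exists_superset_lt_extOf_add h𝒜 hl hpos hB₁ (half_pos hε)
    obtain ⟨A₂, hA₂, hBA₂, hlt₂⟩ := exists_superset_lt_extOf_add h𝒜 hl hpos hB₂ (half_pos hε)
    calc extOf 𝒜 l (B₁ ∪ B₂)
        ≤ l (A₁ ∪ A₂) :=
          extOf_le_of_subset h𝒜 hl hpos (h𝒜.union_mem hA₁ hA₂) (union_subset_union hBA₁ hBA₂)
      _ ≤ l A₁ + l A₂ := hl.union_le h𝒜 hpos hA₁ hA₂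
      _ < extOf 𝒜 l B₁ + extOf 𝒜 l B₂ + ε := by linarith
  · have hinner : ∀ A₂ ∈ 𝒜, A₂ ⊆ B₂ → extOf 𝒜 l B₁ + l A₂ ≤ extOf 𝒜 l (B₁ ∪ B₂) := by
      intro A₂ hA₂ hAB₂
      refine le_sub_iff_add_le.1 (extOf_le h𝒜 hl.1 fun A₁ hA₁ hAB₁ => le_sub_iff_add_le.2 ?_)
      rw [← hl.2.1 A₁ hA₁ A₂ hA₂ (hdisj.mono hAB₁ hAB₂)]
      exact le_extOf h𝒜 hl hpos (h𝒜.union_mem hA₁ hA₂) (union_subset_union hAB₁ hAB₂)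
    exact le_sub_iff_add_le'.1
      (extOf_le h𝒜 hl.1 fun A₂ hA₂ hAB₂ => le_sub_iff_add_le'.2 (hinner A₂ hA₂ hAB₂))

theorem isFinAdd_extOf (h𝒜 : IsAlg 𝒜) (hl : IsFinAdd 𝒜 l) (hpos : IsPos 𝒜 l) :
    IsFinAdd (Completion 𝒜 l) (extOf 𝒜 l) := by
  refine ⟨(extOf_eq_of_mem h𝒜 hl hpos h𝒜.empty_mem).trans hl.1,
    fun B₁ hB₁ B₂ hB₂ => extOf_union h𝒜 hl hpos hB₁ hB₂, l univ, fun B _ => abs_le.2 ⟨?_, ?_⟩⟩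
  · linarith [extOf_nonneg h𝒜 hl hpos B, hpos univ h𝒜.univ_mem]
  · exact extOf_le_of_subset h𝒜 hl hpos h𝒜.univ_mem (subset_univ B)

theorem eq_extOf_of_extends (h𝒜 : IsAlg 𝒜) (hl : IsFinAdd 𝒜 l) (hpos : IsPos 𝒜 l)
    {m : Set Ω → ℝ} (hm : IsFinAdd (Completion 𝒜 l) m) (hmpos : IsPos (Completion 𝒜 l) m)
    (hml : ∀ A ∈ 𝒜, m A = l A) {B : Set Ω} (hB : B ∈ Completion 𝒜 l) :
    m B = extOf 𝒜 l B := by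
  have hC := isAlg_completion h𝒜 hl hpos
  have hsub : 𝒜 ⊆ Completion 𝒜 l := subset_completion hl.1
  refine le_antisymm (le_of_forall_pos_lt_add fun ε hε => ?_) ?_
  · obtain ⟨A', hA', hBA', hlt⟩ := exists_superset_lt_extOf_add h𝒜 hl hpos hB hε
    exact (hml A' hA' ▸ hm.mono hC hmpos hB (hsub hA') hBA').trans_lt hlt
  · exact extOf_le h𝒜 hl.1 fun A hA hAB => hml A hA ▸ hm.mono hC hmpos (hsub hA) hB hAB

end Extension

/-- the λ-completion 𝒜(λ) is an algebra containing 𝒜, and λ̄ given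
by the sup/inf formula is the unique (positive) finitely additive extension of λ. -/
theorem completion_extension {Ω : Type*} (𝒜 : Set (Set Ω)) (hA : IsAlg 𝒜)
    (l : Set Ω → ℝ) (hl : IsFinAdd 𝒜 l) (hpos : IsPos 𝒜 l) :
    IsAlg (Completion 𝒜 l) ∧ 𝒜 ⊆ Completion 𝒜 l ∧
    (∀ A ∈ 𝒜, extOf 𝒜 l A = l A) ∧
    (∀ B ∈ Completion 𝒜 l,
      extOf 𝒜 l B = sInf {x | ∃ A' ∈ 𝒜, B ⊆ A' ∧ x = l A'}) ∧
    IsFinAdd (Completion 𝒜 l) (extOf 𝒜 l) ∧ IsPos (Completion 𝒜 l) (extOf 𝒜 l) ∧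
    (∀ m : Set Ω → ℝ, IsFinAdd (Completion 𝒜 l) m → IsPos (Completion 𝒜 l) m →
      (∀ A ∈ 𝒜, m A = l A) → ∀ B ∈ Completion 𝒜 l, m B = extOf 𝒜 l B) :=
  ⟨isAlg_completion hA hl hpos, subset_completion hl.1,
    fun _ => extOf_eq_of_mem hA hl hpos, fun _ => extOf_eq_sInf hA hl hpos,
    isFinAdd_extOf hA hl hpos, fun B _ => extOf_nonneg hA hl hpos B,
    fun _ hm hmpos hml _ => eq_extOf_of_extends hA hl hpos hm hmpos hml⟩
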